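/- Let X ⊆ ℕ be infinite. Then U₁(X) holds if and only if for every infinite ultimately periodic set Y ⊆ ℕ there exist y, y' ∈ Y with y < y' such that no element of X lies strictly between y and y'. -/

import Mathlib

/-- `x < x'` are consecutive elements of `X`. -/
def ConsecutiveIn (X : Set ℕ) (x x' : ℕ) : Prop :=
  x ∈ X ∧ x' ∈ X ∧ x < x' ∧ ∀ z ∈ X, ¬(x < z ∧ z < x')

/-- The predicate `U₁(X)`: for every `k` there are consecutive positions of `X`
at distance at least `k`. -/
def U₁ (X : Set ℕ) : Prop :=
  ∀ k : ℕ, ∃ x x', ConsecutiveIn X x x' ∧ k ≤ x' - x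

/-- `Y` is ultimately periodic. -/
def UltimatelyPeriodic (Y : Set ℕ) : Prop :=
  ∃ p N : ℕ, 1 ≤ p ∧ ∀ n ≥ N, (n ∈ Y ↔ n + p ∈ Y)

/-!
An infinite ultimately periodic set `Y` contains an arithmetic progression `m + pℕ`, and any gap
of `X` longer than `m + 2p` contains two consecutive terms of it. Conversely, the progression
`x₀ + (k + 1)ℕ` through a point `x₀ ∈ X` is ultimately periodic; two of its terms with no element
of `X` between them are at least `k + 1` apart, and the nearest elements of `X` on either side of
them form a gap of `X` of length at least `k + 1`.
-/

lemma UltimatelyPeriodic.exists_arithProg_subset {Y : Set ℕ} (hY : UltimatelyPeriodic Y)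
    (hYinf : Y.Infinite) : ∃ m p, 0 < p ∧ ∀ j, m + p * j ∈ Y := by
  obtain ⟨p, N, hp, hper⟩ := hY
  obtain ⟨m, hmY, hNm⟩ := hYinf.exists_gt N
  refine ⟨m, p, hp, fun j => ?_⟩
  induction j with
  | zero => simpa using hmY
  | succ j ih =>
    rw [Nat.mul_succ, ← add_assoc]
    exact (hper _ (by omega)).mp ih

lemma exists_lt_arithProg_succ_le (m : ℕ) {p : ℕ} (hp : 0 < p) (x : ℕ) :
    ∃ j, x < m + p * j ∧ m + p * (j + 1) ≤ x + m + 2 * p := by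
  refine ⟨x / p + 1, ?_, ?_⟩
  · have := Nat.lt_mul_div_succ x hp
    omega
  · have := Nat.mul_div_le x p
    rw [mul_add, mul_add]
    omega

theorem U₁.exists_gap_of_ultimatelyPeriodic {X Y : Set ℕ} (hU : U₁ X) (hYinf : Y.Infinite)
    (hY : UltimatelyPeriodic Y) :
    ∃ y ∈ Y, ∃ y' ∈ Y, y < y' ∧ ∀ x ∈ X, ¬(y < x ∧ x < y') := by
  obtain ⟨m, p, hp, hmemY⟩ := hY.exists_arithProg_subset hYinf
  obtain ⟨x, x', ⟨-, -, -, hgap⟩, hlen⟩ := hU (m + 2 * p)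
  obtain ⟨j, hxy, hy'x'⟩ := exists_lt_arithProg_succ_le m hp x
  refine ⟨_, hmemY j, _, hmemY (j + 1), by rw [mul_add]; omega, fun z hz ⟨hyz, hzy'⟩ => ?_⟩
  exact hgap z hz ⟨hxy.trans hyz, by omega⟩

lemma ultimatelyPeriodic_range_arithProg (a : ℕ) {p : ℕ} (hp : 0 < p) :
    UltimatelyPeriodic (Set.range fun j => a + p * j) := by
  refine ⟨p, a, hp, fun n hn => ⟨?_, ?_⟩⟩
  · rintro ⟨j, rfl⟩
    exact ⟨j + 1, by ring⟩
  · rintro ⟨_ | j, hj⟩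
    · dsimp only at hj
      omega
    · refine ⟨j, ?_⟩
      dsimp only at hj ⊢
      rw [Nat.mul_succ] at hj
      omega

lemma infinite_range_arithProg (a : ℕ) {p : ℕ} (hp : 0 < p) :
    (Set.range fun j => a + p * j).Infinite :=
  Set.infinite_range_of_injective fun _ _ h =>
    Nat.eq_of_mul_eq_mul_left hp (Nat.add_left_cancel h)

lemma add_le_of_arithProg_lt {a p i j : ℕ} (h : a + p * i < a + p * j) :
    a + p * i + p ≤ a + p * j := by
  have hij : i + 1 ≤ j := Nat.lt_of_mul_lt_mul_left (Nat.lt_of_add_lt_add_left h)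
  calc a + p * i + p = a + p * (i + 1) := by ring
    _ ≤ a + p * j := by gcongr

lemma exists_consecutiveIn_le_lt {X : Set ℕ} {a b y : ℕ} (ha : a ∈ X) (hay : a ≤ y)
    (hb : b ∈ X) (hyb : y < b) : ∃ x x', ConsecutiveIn X x x' ∧ x ≤ y ∧ y < x' := by
  classical
  have habove : ∃ z, z ∈ X ∧ y < z := ⟨b, hb, hyb⟩
  obtain ⟨hx'X, hyx'⟩ := Nat.find_spec habove
  refine ⟨Nat.findGreatest (· ∈ X) y, Nat.find habove,
    ⟨Nat.findGreatest_spec hay ha, hx'X, (Nat.findGreatest_le y).trans_lt hyx', ?_⟩,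
    Nat.findGreatest_le y, hyx'⟩
  rintro z hz ⟨hxz, hzx'⟩
  rcases le_or_gt z y with hzy | hyz
  · exact hxz.not_ge (Nat.le_findGreatest hzy hz)
  · exact Nat.find_min habove hzx' ⟨hz, hyz⟩

theorem stmt7 (X : Set ℕ) (hX : X.Infinite) :
    U₁ X ↔
      ∀ Y : Set ℕ, Y.Infinite → UltimatelyPeriodic Y →
        ∃ y ∈ Y, ∃ y' ∈ Y, y < y' ∧ ∀ x ∈ X, ¬(y < x ∧ x < y') := by
  refine ⟨fun hU Y hYinf hY => hU.exists_gap_of_ultimatelyPeriodic hYinf hY, fun h k => ?_⟩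
  obtain ⟨x₀, hx₀⟩ := hX.nonempty
  obtain ⟨_, ⟨i, rfl⟩, _, ⟨j, rfl⟩, hij, hgap⟩ := h _
    (infinite_range_arithProg x₀ k.add_one_pos) (ultimatelyPeriodic_range_arithProg x₀ k.add_one_pos)
  dsimp only at hij hgap
  obtain ⟨b, hbX, hib⟩ := hX.exists_gt (x₀ + (k + 1) * i)
  obtain ⟨x, x', hcons, hxi, hix'⟩ :=
    exists_consecutiveIn_le_lt hx₀ (Nat.le_add_right _ _) hbX hib
  have hjx' : x₀ + (k + 1) * j ≤ x' := not_lt.1 fun hx'j => hgap x' hcons.2.1 ⟨hix', hx'j⟩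
  have := add_le_of_arithProg_lt hij
  exact ⟨x, x', hcons, by omega⟩
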